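/- The Batch Norm Jacobian annihilates the span of the input, the all-ones vector, and the output, and its range is orthogonal to that span: Fix N ≥ 1, c₁, c₀ ∈ ℝ, and in ℝ^N let 𝟙 be the all-ones vector, μ(f) = (1/N)Σ_i f_i, σ(f) = ‖f − μ(f)𝟙‖₂/√N, BN(f) = c₁(f − μ(f)𝟙)/σ(f) + c₀𝟙. Let f ∈ ℝ^N with σ(f) > 0 and let J be the Fréchet derivative of BN at f. Then: J f = 0, J 𝟙 = 0, J (BN(f)) = 0, and for every g ∈ ℝ^N, ⟨J g, f⟩ = 0 and ⟨J g, 𝟙⟩ = 0. -/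

import Mathlib

open Finset
open scoped RealInnerProductSpace

/-- The all-ones vector in `ℝ^N`. -/
noncomputable def ones (N : ℕ) : EuclideanSpace ℝ (Fin N) := WithLp.toLp 2 (fun _ => 1)

/-- Batch mean `μ(f) = (1/N) Σ_i f_i`. -/
noncomputable def bnMean (N : ℕ) (f : EuclideanSpace ℝ (Fin N)) : ℝ :=
  (∑ i, f i) / N

/-- Batch standard deviation `σ(f) = ‖f − μ(f)𝟙‖₂ / √N`. -/
noncomputable def bnSigma (N : ℕ) (f : EuclideanSpace ℝ (Fin N)) : ℝ :=
  ‖f - bnMean N f • ones N‖ / Real.sqrt N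

/-- The Batch Normalization map `BN(f) = c₁ (f − μ(f)𝟙)/σ(f) + c₀𝟙`. -/
noncomputable def BN (N : ℕ) (c₁ c₀ : ℝ) (f : EuclideanSpace ℝ (Fin N)) :
    EuclideanSpace ℝ (Fin N) :=
  c₁ • (bnSigma N f)⁻¹ • (f - bnMean N f • ones N) + c₀ • ones N

/-!
Write `P` for the orthogonal projection onto `𝟙ᗮ`. Then `P f = f − μ(f)𝟙` and
`σ(f) = ‖P f‖ / √N`, so `BN = c₁√N · (x ↦ ‖x‖⁻¹ x) ∘ P + c₀𝟙`. The derivative of the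
normalisation `x ↦ ‖x‖⁻¹ x` is `‖x‖⁻¹` times the orthogonal projection onto `xᗮ`, so
`J = c₁√N ‖P f‖⁻¹ · Q ∘ P` with `Q` the projection onto `(P f)ᗮ`. This kills `𝟙` and `f`, hence
also `BN(f) ∈ span {f, 𝟙}`; and since `P f ⊥ 𝟙`, its range lies in `𝟙ᗮ ∩ (P f)ᗮ`, which is
orthogonal to `f = P f + μ(f)𝟙`.
-/

section Normalize

variable {E : Type*} [NormedAddCommGroup E] [InnerProductSpace ℝ E] {x : E}

theorem hasFDerivAt_norm (hx : x ≠ 0) :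
    HasFDerivAt (fun y : E => ‖y‖) (‖x‖⁻¹ • innerSL ℝ x) x := by
  have h := (hasStrictFDerivAt_norm_sq x).hasFDerivAt.sqrt (by positivity)
  simp only [Real.sqrt_sq, norm_nonneg] at h
  refine h.congr_fderiv ?_
  ext y
  simp only [smul_apply, coe_innerSL_apply, smul_eq_mul, nsmul_eq_mul, Nat.cast_ofNat]
  field_simp

theorem hasFDerivAt_inv_norm_smul (hx : x ≠ 0) :
    HasFDerivAt (fun y : E => ‖y‖⁻¹ • y) (‖x‖⁻¹ • (ℝ ∙ x)ᗮ.starProjection) x := by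
  have hn : ‖x‖ ≠ 0 := norm_ne_zero_iff.mpr hx
  refine (((hasDerivAt_inv hn).comp_hasFDerivAt x (hasFDerivAt_norm hx)).smul
    (hasFDerivAt_id x)).congr_fderiv ?_
  rw [Submodule.starProjection_orthogonal]
  ext y
  simp only [add_apply, sub_apply, smul_apply, ContinuousLinearMap.id_apply,
    ContinuousLinearMap.smulRight_apply, coe_innerSL_apply, Function.comp_apply, id_eq,
    Submodule.starProjection_singleton, Real.ringHom_apply]
  module

end Normalize

section Projection

variable {𝕜 E : Type*} [RCLike 𝕜] [NormedAddCommGroup E] [InnerProductSpace 𝕜 E]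

theorem inner_starProjection_orthogonalComplement_singleton_eq_zero (v y : E) :
    inner 𝕜 ((𝕜 ∙ v)ᗮ.starProjection y) v = 0 :=
  Submodule.inner_left_of_mem_orthogonal (Submodule.mem_span_singleton_self v)
    (Submodule.starProjection_apply_mem _ y)

theorem inner_starProjection_orthogonalComplement_singleton_of_inner_eq_zero {u v : E}
    (h : inner 𝕜 v u = 0) (y : E) :
    inner 𝕜 ((𝕜 ∙ v)ᗮ.starProjection y) u = inner 𝕜 y u := by
  rw [Submodule.inner_starProjection_left_eq_right, Submodule.starProjection_eq_self_iff.mpr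
    (Submodule.mem_orthogonal_singleton_iff_inner_right.mpr h)]

end Projection

theorem inner_ones_left (N : ℕ) (x : EuclideanSpace ℝ (Fin N)) : ⟪ones N, x⟫ = ∑ i, x i := by
  simp [PiLp.inner_apply, ones]

theorem norm_ones_sq (N : ℕ) : ‖ones N‖ ^ 2 = N := by
  rw [← real_inner_self_eq_norm_sq, inner_ones_left]
  simp [ones]

theorem starProjection_orthogonal_ones_apply (N : ℕ) (x : EuclideanSpace ℝ (Fin N)) :
    (ℝ ∙ ones N)ᗮ.starProjection x = x - bnMean N x • ones N := by
  rw [Submodule.starProjection_orthogonal_val, Submodule.starProjection_singleton,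
    inner_ones_left, norm_ones_sq, RCLike.ofReal_real_eq_id, id, bnMean]

theorem BN_eq_inv_norm_smul_starProjection (N : ℕ) (c₁ c₀ : ℝ) : BN N c₁ c₀ = fun x =>
    (c₁ * √N) • (‖(ℝ ∙ ones N)ᗮ.starProjection x‖⁻¹ • (ℝ ∙ ones N)ᗮ.starProjection x)
      + c₀ • ones N := by
  ext1 x
  rw [BN, bnSigma, starProjection_orthogonal_ones_apply, inv_div, div_eq_mul_inv, mul_smul,
    mul_smul]

theorem hasFDerivAt_BN (N : ℕ) (c₁ c₀ : ℝ) {f : EuclideanSpace ℝ (Fin N)}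
    (hf : (ℝ ∙ ones N)ᗮ.starProjection f ≠ 0) :
    HasFDerivAt (BN N c₁ c₀) ((c₁ * √N * ‖(ℝ ∙ ones N)ᗮ.starProjection f‖⁻¹) •
      (ℝ ∙ (ℝ ∙ ones N)ᗮ.starProjection f)ᗮ.starProjection.comp
        (ℝ ∙ ones N)ᗮ.starProjection) f := by
  rw [BN_eq_inv_norm_smul_starProjection]
  have := (((hasFDerivAt_inv_norm_smul hf).comp f
    (ℝ ∙ ones N)ᗮ.starProjection.hasFDerivAt).const_smul (c₁ * √N)).add_const (c₀ • ones N)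
  refine this.congr_fderiv ?_
  ext1 g
  simp [mul_smul]

theorem bn_jacobian_annihilates_general (N : ℕ) (c₁ c₀ : ℝ)
    (f : EuclideanSpace ℝ (Fin N)) (hσ : 0 < bnSigma N f)
    (J : EuclideanSpace ℝ (Fin N) →L[ℝ] EuclideanSpace ℝ (Fin N))
    (hJ : J = fderiv ℝ (BN N c₁ c₀) f) :
    J f = 0 ∧ J (ones N) = 0 ∧ J (BN N c₁ c₀ f) = 0 ∧
      ∀ g : EuclideanSpace ℝ (Fin N), ⟪J g, f⟫ = 0 ∧ ⟪J g, ones N⟫ = 0 := by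
  set P := (ℝ ∙ ones N)ᗮ.starProjection
  set v := P f
  have hv : v ≠ 0 := by
    rw [bnSigma, ← starProjection_orthogonal_ones_apply] at hσ
    exact norm_pos_iff.mp (pos_of_mul_pos_left hσ (by positivity))
  have hJg (g) : J g = (c₁ * √N * ‖v‖⁻¹) • (ℝ ∙ v)ᗮ.starProjection (P g) := by
    rw [hJ, (hasFDerivAt_BN N c₁ c₀ hv).fderiv]
    rfl
  have hJf : J f = 0 := by
    rw [hJg, Submodule.starProjection_orthogonalComplement_singleton_eq_zero, smul_zero]
  have hJ1 : J (ones N) = 0 := by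
    rw [hJg, Submodule.starProjection_orthogonalComplement_singleton_eq_zero, map_zero, smul_zero]
  have hJg1 (g) : ⟪J g, ones N⟫ = 0 := by
    rw [hJg, real_inner_smul_left,
      inner_starProjection_orthogonalComplement_singleton_of_inner_eq_zero
        (inner_starProjection_orthogonalComplement_singleton_eq_zero _ f),
      inner_starProjection_orthogonalComplement_singleton_eq_zero, mul_zero]
  have hJgv (g) : ⟪J g, v⟫ = 0 := by
    rw [hJg, real_inner_smul_left, inner_starProjection_orthogonalComplement_singleton_eq_zero,
      mul_zero]
  refine ⟨hJf, hJ1, ?_, fun g => ⟨?_, hJg1 g⟩⟩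
  · simp only [BN, map_add, map_smul, map_sub, hJf, hJ1, smul_zero, sub_zero, add_zero]
  · have hf : f = v + bnMean N f • ones N := by
      rw [← sub_eq_iff_eq_add]
      exact (starProjection_orthogonal_ones_apply N f).symm
    rw [hf, inner_add_right, real_inner_smul_right, hJgv, hJg1, mul_zero, add_zero]

/-- The Batch Norm Jacobian annihilates the span of the input `f`, the all-ones
vector `𝟙` and the output `BN(f)`, and its range is orthogonal to `f` and `𝟙`. -/
theorem bn_jacobian_annihilates (N : ℕ) (hN : 1 ≤ N) (c₁ c₀ : ℝ)
    (f : EuclideanSpace ℝ (Fin N)) (hσ : 0 < bnSigma N f)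
    (J : EuclideanSpace ℝ (Fin N) →L[ℝ] EuclideanSpace ℝ (Fin N))
    (hJ : J = fderiv ℝ (BN N c₁ c₀) f) :
    J f = 0 ∧ J (ones N) = 0 ∧ J (BN N c₁ c₀ f) = 0 ∧
      ∀ g : EuclideanSpace ℝ (Fin N), ⟪J g, f⟫ = 0 ∧ ⟪J g, ones N⟫ = 0 :=
  bn_jacobian_annihilates_general N c₁ c₀ f hσ J hJ
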